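/- Let q be a prime power and k ≥ 2. If B(k,q) is not a blocking set of PG(k-2, q^{k(k-1)}) — that is, if there exists a (k-2)-dimensional L-subspace of L^{k-1} containing no nonzero vector of R^{k-1} — then there exist α₁, …, α_{k-1} ∈ L ∖ {0} such that the set S = {K·x : x ∈ α_i·(R∖{0}) for some i = 1, …, k-1} of points of PG(k-1, q^{k-1}) is a strong blocking set. -/

import Mathlib

/-! Take a linear form `φ` on `L^{k-1}` whose kernel is the hyperplane missing `R^{k-1} ∖ {0}`,
and `αᵢ = φ(eᵢ)`. For `yᵢ ∈ F ∖ {0}` a `K`-relation `∑ cᵢ αᵢ yᵢ = 0` says that the vector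
`(cᵢ yᵢ) ∈ R^{k-1}` lies in `ker φ`, so it vanishes: the `αᵢ yᵢ` are `K`-independent.
A `K`-hyperplane `H` of `L` has `|L / H| = q^{k-1} < q^k = |F|`, so by pigeonhole each `αᵢ F`
meets `H` in some `αᵢ yᵢ ≠ 0`; these `k - 1` independent points of `S` lie in `H` and span it. -/

open Module Submodule

theorem AddMonoidHom.exists_ne_zero_map_eq_zero_of_natCard_lt {G H : Type*} [AddGroup G]
    [AddGroup H] [Finite H] (f : G →+ H) (h : Nat.card H < Nat.card G) :
    ∃ g, g ≠ 0 ∧ f g = 0 := by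
  by_contra! hf
  have hinj : Function.Injective f :=
    (injective_iff_map_eq_zero f).2 fun g hg => by_contra fun hg0 => hf g hg0 hg
  exact (Nat.card_le_card_of_injective f hinj).not_gt h

theorem Submodule.exists_ne_zero_mul_mem_of_natCard_quotient_lt {K L : Type*} [Ring K] [Ring L]
    [Module K L] (N : Submodule K L) [Finite (L ⧸ N)] (F : Subring L) (α : L)
    (h : Nat.card (L ⧸ N) < Nat.card F) : ∃ y ∈ F, y ≠ 0 ∧ α * y ∈ N := by
  let f : F →+ L ⧸ N :=
    N.mkQ.toAddMonoidHom.comp ((AddMonoidHom.mulLeft α).comp F.subtype.toAddMonoidHom)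
  obtain ⟨y, hy0, hy⟩ := f.exists_ne_zero_map_eq_zero_of_natCard_lt h
  exact ⟨y, y.2, fun h => hy0 (Subtype.ext h), (Quotient.mk_eq_zero N).1 hy⟩

section Hyperplane

variable {K V : Type*} [Field K] [AddCommGroup V] [Module K V] [FiniteDimensional K V]
  {W : Submodule K V}

theorem Submodule.finrank_quotient_eq_one (hW : finrank K W + 1 = finrank K V) :
    finrank K (V ⧸ W) = 1 := by
  have := W.finrank_quotient_add_finrank
  omega

theorem Submodule.exists_ker_eq_of_finrank_add_one (hW : finrank K W + 1 = finrank K V) :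
    ∃ φ : V →ₗ[K] K, LinearMap.ker φ = W := by
  obtain ⟨e⟩ := FiniteDimensional.nonempty_linearEquiv_of_finrank_eq
    (R := K) (M := V ⧸ W) (M' := K) (by rw [finrank_quotient_eq_one hW, finrank_self])
  exact ⟨e.toLinearMap ∘ₗ W.mkQ, by rw [LinearMap.ker_comp, e.ker, comap_bot, ker_mkQ]⟩

theorem Submodule.natCard_quotient_of_finrank_add_one (hW : finrank K W + 1 = finrank K V) :
    Nat.card (V ⧸ W) = Nat.card K := by
  rw [natCard_eq_pow_finrank (K := K), finrank_quotient_eq_one hW, pow_one]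

theorem Submodule.eq_span_of_linearIndependent {ι : Type*} [Fintype ι] {T : Set V}
    (hTW : T ⊆ W) {v : ι → V} (hvT : ∀ i, v i ∈ T) (hv : LinearIndependent K v)
    (hcard : Fintype.card ι = finrank K W) : W = span K T := by
  have hspan : span K (Set.range v) = W :=
    eq_of_le_of_finrank_eq (span_le.2 (Set.range_subset_iff.2 fun i => hTW (hvT i)))
      (by rw [finrank_span_eq_card hv, hcard])
  refine le_antisymm ?_ (span_le.2 hTW)
  exact hspan ▸ span_mono (Set.range_subset_iff.2 hvT)

end Hyperplane

theorem Module.finrank_eq_of_natCard_eq_pow {K V : Type*} [DivisionRing K] [AddCommGroup V]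
    [Module K V] [Module.Finite K V] {n : ℕ} (hK : 1 < Nat.card K)
    (h : Nat.card V = Nat.card K ^ n) : finrank K V = n :=
  Nat.pow_right_injective hK (natCard_eq_pow_finrank.symm.trans h)

theorem LinearMap.linearIndependent_map_single_mul {ι L : Type*} [Fintype ι] [DecidableEq ι]
    [Field L] (φ : (ι → L) →ₗ[L] L) (K : Subfield L) (R : Set L)
    (hφ : ∀ v ∈ LinearMap.ker φ, (∀ i, v i ∈ R) → v = 0) (y : ι → L) (hy : ∀ i, y i ≠ 0)
    (hKy : ∀ i, ∀ c ∈ K, c * y i ∈ R) :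
    LinearIndependent K fun i => φ (Pi.single i 1) * y i := by
  refine Fintype.linearIndependent_iff.2 fun g hg i => ?_
  have hker : (fun i => (g i : L) * y i) ∈ LinearMap.ker φ := by
    rw [LinearMap.mem_ker, φ.pi_apply_eq_sum_univ]
    refine Eq.trans (Finset.sum_congr rfl fun j _ => ?_) hg
    have hsingle : (fun j' => if j = j' then (1 : L) else 0) = Pi.single j 1 := by
      ext j'
      simp [Pi.single_apply, eq_comm]
    rw [hsingle, smul_eq_mul, Subfield.smul_def]
    ring
  have := congrFun (hφ _ hker fun j => hKy j _ (g j).2) i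
  simpa [hy i] using this

theorem not_blocking_implies_strong_blocking_from_subgeometries_general
    (q k : ℕ)
    (L : Type) [Field L] [Finite L] (hL : Nat.card L = q ^ (k * (k - 1)))
    (K F : Subfield L) (hK : Nat.card K = q ^ (k - 1)) (hF : Nat.card F = q ^ k)
    (R : Set L) (hR : R = {z | ∃ x ∈ K, ∃ y ∈ F, z = x * y})
    (hnotblock : ∃ W : Submodule L (Fin (k - 1) → L), Module.finrank L ↥W = k - 2 ∧
      ∀ v ∈ W, (∀ i, v i ∈ R) → v = 0) :
    ∃ α : Fin (k - 1) → L, (∀ i, α i ≠ 0) ∧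
      ∀ W : Submodule ↥K L, Module.finrank ↥K ↥W = k - 1 →
        W = Submodule.span ↥K (⋃ P ∈ {P | (∃ (i : Fin (k - 1)) (ρ : L), ρ ∈ R ∧ ρ ≠ 0 ∧
          P = Submodule.span ↥K {α i * ρ}) ∧ P ≤ W}, (P : Set L)) := by
  obtain ⟨W, hWrank, hW⟩ := hnotblock
  have hK1 : 1 < Nat.card K := Finite.one_lt_card
  have hk : k - 1 ≠ 0 := by
    rintro h0
    rw [h0, pow_zero] at hK
    omega
  have hq : 1 < q := (Nat.one_lt_pow_iff hk).1 (hK ▸ hK1)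
  have hKF : ∀ y ∈ F, ∀ c ∈ K, c * y ∈ R := fun y hy c hc => hR ▸ ⟨c, hc, y, hy, rfl⟩
  obtain ⟨φ, rfl⟩ := W.exists_ker_eq_of_finrank_add_one (by rw [hWrank, finrank_fin_fun]; omega)
  have hα := φ.linearIndependent_map_single_mul K R hW (fun _ => 1)
    (fun _ => one_ne_zero) fun _ => hKF 1 F.one_mem
  refine ⟨fun i => φ (Pi.single i 1), fun i => by simpa using hα.ne_zero i, fun Wk hWk => ?_⟩
  have hdim : finrank K L = k :=
    finrank_eq_of_natCard_eq_pow hK1 (by rw [hL, hK, ← pow_mul, mul_comm])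
  have hcard : Nat.card (L ⧸ Wk) < Nat.card F := by
    rw [Wk.natCard_quotient_of_finrank_add_one (by omega), hK, hF]
    exact Nat.pow_lt_pow_right hq (by omega)
  have : Finite (L ⧸ Wk) := Finite.of_surjective _ Wk.mkQ_surjective
  choose y hyF hy0 hyWk using fun i =>
    Wk.exists_ne_zero_mul_mem_of_natCard_quotient_lt F.toSubring (φ (Pi.single i 1)) hcard
  refine eq_span_of_linearIndependent (Set.iUnion₂_subset fun P hP => hP.2) (fun i => ?_)
    (φ.linearIndependent_map_single_mul K R hW y hy0 fun i => hKF _ (hyF i))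
    (by simp [hWk])
  exact Set.mem_iUnion₂.2 ⟨span K {_}, ⟨⟨i, y i, one_mul (y i) ▸ hKF _ (hyF i) 1 K.one_mem,
    hy0 i, rfl⟩, span_singleton_le_iff_mem _ _ |>.2 (hyWk i)⟩, mem_span_singleton_self _⟩

/-- Let `q` be a prime power and `k ≥ 2`, `L` the finite field with `q^{k(k-1)}` elements,
`K` its subfield with `q^{k-1}` elements and `F` its subfield with `q^k` elements, and
`R = {x·y : x ∈ K, y ∈ F}`.  If `B(k,q)` is not a blocking set of `PG(k-2, q^{k(k-1)})`,
i.e. there is a hyperplane (a `(k-2)`-dimensional `L`-subspace of `L^{k-1}`) containing no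
nonzero vector of `R^{k-1}`, then there exist `α₁, …, α_{k-1} ∈ L ∖ {0}` such that the set
`S = {K·x : x ∈ αᵢ·R*, 1 ≤ i ≤ k-1}` of points of `PG(k-1, q^{k-1})` (the projective space
of `L` viewed as a `K`-vector space of dimension `k`) is a strong blocking set. -/
theorem not_blocking_implies_strong_blocking_from_subgeometries
    (p h q k : ℕ) (hp : p.Prime) (hh : 1 ≤ h) (hq : q = p ^ h) (hk : 2 ≤ k)
    (L : Type) [Field L] [Finite L] (hL : Nat.card L = q ^ (k * (k - 1)))
    (K F : Subfield L) (hK : Nat.card K = q ^ (k - 1)) (hF : Nat.card F = q ^ k)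
    (R : Set L) (hR : R = {z | ∃ x ∈ K, ∃ y ∈ F, z = x * y})
    (hnotblock : ∃ W : Submodule L (Fin (k - 1) → L), Module.finrank L ↥W = k - 2 ∧
      ∀ v ∈ W, (∀ i, v i ∈ R) → v = 0) :
    ∃ α : Fin (k - 1) → L, (∀ i, α i ≠ 0) ∧
      ∀ W : Submodule ↥K L, Module.finrank ↥K ↥W = k - 1 →
        W = Submodule.span ↥K (⋃ P ∈ {P | (∃ (i : Fin (k - 1)) (ρ : L), ρ ∈ R ∧ ρ ≠ 0 ∧
          P = Submodule.span ↥K {α i * ρ}) ∧ P ≤ W}, (P : Set L)) :=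
  not_blocking_implies_strong_blocking_from_subgeometries_general q k L hL K F hK hF R hR hnotblock
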